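/- For n, k ≥ 1: (1/k^n) · Σ over all tuples (n₀,…,n_{k−1}) of nonnegative integers summing to n of C(n; n₀,…,n_{k−1}) · max(n₀,…,n_{k−1}) / n equals the posterior single-target vulnerability of the shuffle channel on K^n under uniform prior, i.e., Σ over histograms z of max_{w ∈ K} (1/k^n)·|{x ∈ K^n : h(x) = z, x₀ = w}|, and this quantity equals (1/k^n) · Σ_{(n₀,…,n_{k−1})} C(n; n₀,…,n_{k−1}) · max_j(n_j) / n. -/

import Mathlib

/-!
Counting datasets by their histogram is extracting coefficients from `(X₀ + ⋯ + X_{k-1}) ^ n`, so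
exactly `C(n; z)` datasets have histogram `z`. Swapping two coordinates preserves the histogram,
so the number of datasets with histogram `z` and value `w` at a given position does not depend on
the position; summing over the `n` positions counts each dataset `z w` times. Hence that number is
`z w · C(n; z) / n`, and its maximum over `w` is `max_j z j · C(n; z) / n`.
-/

/-- Histogram of a dataset: the count of each value of K in x. -/
def hist (n k : ℕ) (x : Fin n → Fin k) : Fin k → ℕ :=
  fun v => (Finset.univ.filter fun i => x i = v).card

open Finset MvPolynomial

theorem sum_hist (n k : ℕ) (x : Fin n → Fin k) : ∑ v, hist n k x v = n := by
  unfold hist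
  rw [← card_eq_sum_card_fiberwise (fun i _ => mem_univ (x i)), card_univ, Fintype.card_fin]

theorem prod_X_comp_eq_monomial_hist (n k : ℕ) (x : Fin n → Fin k) :
    ∏ i, (X (x i) : MvPolynomial (Fin k) ℕ) =
      monomial (Finsupp.equivFunOnFinite.symm (hist n k x)) 1 := by
  rw [monomial_eq, C_1, one_mul, Finsupp.prod_fintype _ _ (fun _ => pow_zero _),
    ← prod_fiberwise univ x]
  refine prod_congr rfl fun v _ => ?_
  rw [prod_congr rfl fun i hi => by rw [(mem_filter.1 hi).2], prod_const]
  rfl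

theorem card_filter_hist_eq (n k : ℕ) (z : Fin k → ℕ) :
    #{x : Fin n → Fin k | hist n k x = z} =
      if ∑ v, z v = n then Nat.multinomial univ z else 0 := by
  have hcoeff := coeff_sum_X_pow_of_fintype (R := ℕ) (Finsupp.equivFunOnFinite.symm z) n
  rw [← Fin.prod_const, Fintype.prod_sum, coeff_sum] at hcoeff
  simp only [prod_X_comp_eq_monomial_hist, coeff_monomial, EmbeddingLike.apply_eq_iff_eq,
    sum_boole, Nat.cast_id] at hcoeff
  rw [hcoeff, Finsupp.sum_fintype _ _ (fun _ => rfl),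
    Finsupp.multinomial_eq_of_support_subset (subset_univ _)]
  rfl

theorem image_hist_eq_antidiagonalTuple (n k : ℕ) :
    univ.image (hist n k) = Nat.antidiagonalTuple k n := by
  ext z
  rw [mem_image, Nat.mem_antidiagonalTuple]
  constructor
  · rintro ⟨x, -, rfl⟩
    exact sum_hist n k x
  · intro hz
    have hpos : 0 < #{x : Fin n → Fin k | hist n k x = z} := by
      rw [card_filter_hist_eq, if_pos hz]
      exact Nat.multinomial_pos _ _
    obtain ⟨x, hx⟩ := card_pos.1 hpos
    exact ⟨x, mem_univ x, (mem_filter.1 hx).2⟩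

theorem card_filter_hist_apply_eq (n k : ℕ) (z : Fin k → ℕ) (w : Fin k) (i j : Fin n) :
    #{x : Fin n → Fin k | hist n k x = z ∧ x i = w} =
      #{x : Fin n → Fin k | hist n k x = z ∧ x j = w} := by
  have hswap (x : Fin n → Fin k) : hist n k (x ∘ Equiv.swap i j) = hist n k x :=
    funext fun v => card_equiv (Equiv.swap i j) (by simp)
  refine card_nbij' (· ∘ Equiv.swap i j) (· ∘ Equiv.swap i j) ?_ ?_ ?_ ?_ <;>
    intro x <;> simp [hswap, funext_iff]

theorem sum_card_filter_hist_apply (n k : ℕ) (z : Fin k → ℕ) (w : Fin k) :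
    ∑ i, #{x : Fin n → Fin k | hist n k x = z ∧ x i = w} =
      z w * #{x : Fin n → Fin k | hist n k x = z} := by
  calc ∑ i, #{x : Fin n → Fin k | hist n k x = z ∧ x i = w}
      = ∑ i, ∑ x with hist n k x = z, if x i = w then 1 else 0 := by
        simp only [← filter_filter, card_filter]
    _ = ∑ x with hist n k x = z, hist n k x w := by
        rw [sum_comm]
        simp only [hist, card_filter]
    _ = z w * #{x : Fin n → Fin k | hist n k x = z} := by
        rw [mul_comm, ← smul_eq_mul, ← sum_const]
        exact sum_congr rfl fun x hx => by rw [(mem_filter.1 hx).2]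

theorem card_filter_hist_apply (n k : ℕ) (z : Fin k → ℕ) (hz : ∑ v, z v = n)
    (w : Fin k) (i : Fin n) :
    (#{x : Fin n → Fin k | hist n k x = z ∧ x i = w} : ℝ) =
      Nat.multinomial univ z / n * z w := by
  have hcount : n * #{x : Fin n → Fin k | hist n k x = z ∧ x i = w} =
      z w * Nat.multinomial univ z := by
    calc n * #{x : Fin n → Fin k | hist n k x = z ∧ x i = w}
        = ∑ j, #{x : Fin n → Fin k | hist n k x = z ∧ x j = w} := by
          simp [card_filter_hist_apply_eq n k z w _ i]
      _ = z w * Nat.multinomial univ z := by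
          rw [sum_card_filter_hist_apply, card_filter_hist_eq, if_pos hz]
  have hn : (n : ℝ) ≠ 0 := Nat.cast_ne_zero.2 (Fin.pos i).ne'
  rw [div_mul_eq_mul_div, eq_div_iff hn, mul_comm, mul_comm _ (z w : ℝ)]
  exact_mod_cast hcount

/-- the posterior single-target vulnerability of the shuffle
channel under the uniform prior equals
(1/k^n) · Σ_{(n₀,…,n_{k−1})} C(n; n₀,…,n_{k−1}) · max_j(n_j) / n. -/
theorem stmt13 (n k : ℕ) (hn : 1 ≤ n) (hk : 1 ≤ k) :
    (1 / (k : ℝ) ^ n) * ∑ f ∈ Finset.Nat.antidiagonalTuple k n,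
        (Nat.multinomial Finset.univ f : ℝ) * (Finset.univ.sup f : ℕ) / n
      = ∑ z ∈ Finset.univ.image (hist n k),
          Finset.univ.sup' ⟨⟨0, by omega⟩, Finset.mem_univ _⟩ (fun w : Fin k =>
            (1 / (k : ℝ) ^ n) *
              ((Finset.univ.filter fun x : Fin n → Fin k =>
                  hist n k x = z ∧ x ⟨0, by omega⟩ = w).card : ℝ)) := by
  rw [image_hist_eq_antidiagonalTuple, mul_sum]
  refine sum_congr rfl fun z hz => ?_
  simp only [card_filter_hist_apply n k z (Nat.mem_antidiagonalTuple.1 hz)]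
  have hK : (univ : Finset (Fin k)).Nonempty := ⟨⟨0, by omega⟩, mem_univ _⟩
  calc _ = 1 / (k : ℝ) ^ n * (Nat.multinomial univ z / n * (univ.sup' hK z : ℕ)) := by
        rw [sup'_eq_sup]; ring
    _ = _ := by rw [Nat.cast_finsetSup', mul₀_sup', mul₀_sup'] <;> positivity
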